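/- Under the standing assumptions, ∫_{{|k| ≥ ν}} W(k) |k|^{2/3} ‖ω_k‖²_{L²_y([-1,1])} dk ≲ ν^{-1/3}·𝓔^{1/2}·𝓓₁^{1/4}·𝓓₃^{1/4}. (Second estimate of Lemma 3.2.) -/

import Mathlib

open MeasureTheory Set Filter Topology
open scoped ENNReal

noncomputable section

/-- `L²` norm over `y ∈ [-1,1]`. -/
def L2y (f : ℝ → ℂ) : ℝ := (∫ y in Set.Icc (-1 : ℝ) 1, ‖f y‖ ^ 2) ^ ((1 : ℝ) / 2)

/-- `L^∞` norm over `y ∈ [-1,1]`. -/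
def Linfy (f : ℝ → ℂ) : ℝ := ⨆ y : Set.Icc (-1 : ℝ) 1, ‖f (y : ℝ)‖

/-- `L²([-1,1])` inner product `⟨f,g⟩ = ∫ conj (f y) * g y dy`. -/
def ipy (f g : ℝ → ℂ) : ℂ :=
  ∫ y in Set.Icc (-1 : ℝ) 1, (starRingEnd ℂ) (f y) * g y

/-- The rate `λ_k`. -/
def lamf (ν k : ℝ) : ℝ :=
  if ν ≤ |k| then ν ^ ((1 : ℝ) / 3) * |k| ^ ((2 : ℝ) / 3) else ν

/-- The weight `α(k)`. -/
def alphf (ν k : ℝ) : ℝ :=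
  if ν ≤ |k| then ν ^ ((2 : ℝ) / 3) * |k| ^ (-((2 : ℝ) / 3)) else 1

/-- The weight `β(k)`. -/
def betaf (ν k : ℝ) : ℝ :=
  if ν ≤ |k| then ν ^ ((1 : ℝ) / 3) * |k| ^ (-((4 : ℝ) / 3)) else 0

/-- The frequency weight `W(k) = e^{2cλ_k t}⟨k⟩^{2m}⟨k⁻¹⟩^{2ε}`. -/
def Wf (ν m ε c t k : ℝ) : ℝ :=
  Real.exp (2 * c * lamf ν k * t) * (1 + k ^ 2) ^ m * (1 + k⁻¹ ^ 2) ^ ε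

/-- `‖∇_k f‖²_{L²} = k²‖f‖²_{L²} + ‖∂_y f‖²_{L²}` (with `df = ∂_y f`). -/
def gradSq (k : ℝ) (f df : ℝ → ℂ) : ℝ :=
  k ^ 2 * (L2y f) ^ 2 + (L2y df) ^ 2

/-- The weighted energy `𝓔`. -/
def EEn (ν m ε c t : ℝ) (ω dω : ℝ → ℝ → ℂ) : ℝ≥0∞ :=
  ∫⁻ k : ℝ, ENNReal.ofReal
    (Wf ν m ε c t k * ((L2y (ω k)) ^ 2 + alphf ν k * (L2y (dω k)) ^ 2))

/-- The dissipation functional `𝓓₁`. -/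
def D1n (ν m ε c t : ℝ) (ω dω : ℝ → ℝ → ℂ) : ℝ≥0∞ :=
  ∫⁻ k : ℝ, ENNReal.ofReal (Wf ν m ε c t k * (ν * gradSq k (ω k) (dω k)))

/-- The dissipation functional `𝓓₂`. -/
def D2n (ν m ε c t : ℝ) (dω d2ω : ℝ → ℝ → ℂ) : ℝ≥0∞ :=
  ∫⁻ k : ℝ, ENNReal.ofReal (Wf ν m ε c t k * (ν * alphf ν k * gradSq k (dω k) (d2ω k)))

/-- The dissipation functional `𝓓₃`. -/
def D3n (ν m ε c t : ℝ) (ω : ℝ → ℝ → ℂ) : ℝ≥0∞ :=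
  ∫⁻ k : ℝ, ENNReal.ofReal (Wf ν m ε c t k * (lamf ν k * (L2y (ω k)) ^ 2))

/-- The dissipation functional `𝓓₄`. -/
def D4n (ν m ε c t : ℝ) (φ dφ : ℝ → ℝ → ℂ) : ℝ≥0∞ :=
  ∫⁻ k : ℝ, ENNReal.ofReal (Wf ν m ε c t k * (k ^ 2 * gradSq k (φ k) (dφ k)))

/-- The dissipation functional `𝓓₅`. -/
def D5n (ν m ε c t : ℝ) (dφ d2φ : ℝ → ℝ → ℂ) : ℝ≥0∞ :=
  ∫⁻ k : ℝ, ENNReal.ofReal (Wf ν m ε c t k * (alphf ν k * k ^ 2 * gradSq k (dφ k) (d2φ k)))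

/-!
For `|k| ≥ ν` we have `λ_k = ν^{1/3}|k|^{2/3}`, so pointwise in `k`
`|k|^{2/3} = ν^{-1/3} · 1^{1/2} · (ν k²)^{1/4} · λ_k^{1/4}`.
Multiplying by `W(k)‖ω_k‖²` and bounding `‖ω_k‖² ≤ ‖ω_k‖² + α‖∂_y ω_k‖²` and
`k²‖ω_k‖² ≤ ‖∇_k ω_k‖²` dominates the integrand by the product of the integrands of `𝓔`, `𝓓₁`, `𝓓₃`
raised to the powers `1/2, 1/4, 1/4`; Hölder's inequality in `k` with exponents `(2, 4, 4)`
concludes, with constant `1`.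
-/

theorem lintegral_mul_mul_norm_pow_le {α : Type*} [MeasurableSpace α] {μ : Measure α}
    {f g h : α → ℝ≥0∞} (hf : AEMeasurable f μ) (hg : AEMeasurable g μ) (hh : AEMeasurable h μ)
    {p q r : ℝ} (hp : 0 ≤ p) (hq : 0 ≤ q) (hr : 0 ≤ r) (hpqr : p + q + r = 1) :
    ∫⁻ a, f a ^ p * g a ^ q * h a ^ r ∂μ ≤
      (∫⁻ a, f a ∂μ) ^ p * (∫⁻ a, g a ∂μ) ^ q * (∫⁻ a, h a ∂μ) ^ r := by
  have := ENNReal.lintegral_prod_norm_pow_le (μ := μ) Finset.univ (f := ![f, g, h])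
    (p := ![p, q, r]) (by simp [Fin.forall_fin_succ, hf, hg, hh])
    (by simpa [Fin.sum_univ_three] using hpqr) (by simp [Fin.forall_fin_succ, hp, hq, hr])
  simpa [Fin.prod_univ_three] using this

theorem setLIntegral_le_const_mul_lintegral_pow {α : Type*} [MeasurableSpace α] {μ : Measure α}
    {s : Set α} {F f g h : α → ℝ≥0∞} {C : ℝ≥0∞} {p q r : ℝ} (hs : MeasurableSet s)
    (hf : AEMeasurable f μ) (hg : AEMeasurable g μ) (hh : AEMeasurable h μ)
    (hp : 0 ≤ p) (hq : 0 ≤ q) (hr : 0 ≤ r) (hpqr : p + q + r = 1)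
    (hF : ∀ a ∈ s, F a ≤ C * f a ^ p * g a ^ q * h a ^ r) :
    ∫⁻ a in s, F a ∂μ ≤
      C * (∫⁻ a, f a ∂μ) ^ p * (∫⁻ a, g a ∂μ) ^ q * (∫⁻ a, h a ∂μ) ^ r := by
  calc ∫⁻ a in s, F a ∂μ ≤ ∫⁻ a in s, C * (f a ^ p * g a ^ q * h a ^ r) ∂μ :=
        setLIntegral_mono' hs fun a ha => (hF a ha).trans_eq (by ring)
    _ ≤ ∫⁻ a, C * (f a ^ p * g a ^ q * h a ^ r) ∂μ := setLIntegral_le_lintegral _ _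
    _ = C * ∫⁻ a, f a ^ p * g a ^ q * h a ^ r ∂μ :=
        lintegral_const_mul'' _ (((hf.pow_const p).mul (hg.pow_const q)).mul (hh.pow_const r))
    _ ≤ C * ((∫⁻ a, f a ∂μ) ^ p * (∫⁻ a, g a ∂μ) ^ q * (∫⁻ a, h a ∂μ) ^ r) := by
        gcongr; exact lintegral_mul_mul_norm_pow_le hf hg hh hp hq hr hpqr
    _ = _ := by ring

theorem rpow_two_thirds_mul_eq {ν κ x : ℝ} (hν : 0 < ν) (hκ : 0 < κ) (hx : 0 ≤ x) :
    κ ^ ((2 : ℝ) / 3) * x = ν ^ (-(1 : ℝ) / 3) * x ^ ((1 : ℝ) / 2) * (ν * κ ^ 2 * x) ^ ((1 : ℝ) / 4)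
      * (ν ^ ((1 : ℝ) / 3) * κ ^ ((2 : ℝ) / 3) * x) ^ ((1 : ℝ) / 4) := by
  rw [Real.mul_rpow (by positivity) hx, Real.mul_rpow (by positivity) hx,
    Real.mul_rpow hν.le (by positivity), Real.mul_rpow (by positivity) (by positivity),
    ← Real.rpow_mul hν.le, ← Real.rpow_mul hκ.le, ← Real.rpow_natCast, ← Real.rpow_mul hκ.le]
  have hx' : x = x ^ ((1 : ℝ) / 2) * x ^ ((1 : ℝ) / 4) * x ^ ((1 : ℝ) / 4) := by
    rw [← Real.rpow_add' hx (by norm_num), ← Real.rpow_add' hx (by norm_num)]; norm_num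
  have hν' : ν ^ (-(1 : ℝ) / 3) * ν ^ ((1 : ℝ) / 4) * ν ^ ((1 : ℝ) / 3 * (1 / 4)) = 1 := by
    rw [← Real.rpow_add hν, ← Real.rpow_add hν]; norm_num
  have hκ' : κ ^ ((2 : ℝ) / 3) = κ ^ (((2 : ℕ) : ℝ) * (1 / 4)) * κ ^ ((2 : ℝ) / 3 * (1 / 4)) := by
    rw [← Real.rpow_add hκ]; norm_num
  linear_combination x * hκ' + κ ^ (((2 : ℕ) : ℝ) * (1 / 4)) * κ ^ ((2 : ℝ) / 3 * (1 / 4)) * hx'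
    - κ ^ (((2 : ℕ) : ℝ) * (1 / 4)) * κ ^ ((2 : ℝ) / 3 * (1 / 4)) *
      (x ^ ((1 : ℝ) / 2) * x ^ ((1 : ℝ) / 4) * x ^ ((1 : ℝ) / 4)) * hν'

theorem measurable_L2y_comp {ω : ℝ → ℝ → ℂ} (h : Measurable (Function.uncurry ω)) :
    Measurable fun k => L2y (ω k) := by
  have hsq : StronglyMeasurable fun p : ℝ × ℝ => ‖Function.uncurry ω p‖ ^ 2 :=
    (h.norm.pow_const 2).stronglyMeasurable
  exact hsq.integral_prod_right'.measurable.pow_const _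

@[fun_prop]
theorem measurable_lamf (ν : ℝ) : Measurable (lamf ν) :=
  Measurable.ite (measurableSet_le measurable_const measurable_abs) (by fun_prop) measurable_const

@[fun_prop]
theorem measurable_alphf (ν : ℝ) : Measurable (alphf ν) :=
  Measurable.ite (measurableSet_le measurable_const measurable_abs) (by fun_prop) measurable_const

@[fun_prop]
theorem measurable_Wf (ν m ε c t : ℝ) : Measurable (Wf ν m ε c t) := by
  unfold Wf; fun_prop

theorem lamf_nonneg {ν : ℝ} (hν : 0 ≤ ν) (k : ℝ) : 0 ≤ lamf ν k := by
  unfold lamf; split_ifs <;> positivity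

theorem alphf_nonneg {ν : ℝ} (hν : 0 ≤ ν) (k : ℝ) : 0 ≤ alphf ν k := by
  unfold alphf; split_ifs <;> positivity

theorem Wf_nonneg (ν m ε c t k : ℝ) : 0 ≤ Wf ν m ε c t k := by
  unfold Wf; positivity

theorem ofReal_mul_rpow_two_thirds_le {ν k W q a g : ℝ} (hν : 0 < ν) (hk : ν ≤ |k|)
    (hW : 0 ≤ W) (hq : 0 ≤ q) (ha : 0 ≤ a) (hg : k ^ 2 * q ≤ g) :
    ENNReal.ofReal (W * (|k| ^ ((2 : ℝ) / 3) * q)) ≤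
      ENNReal.ofReal (ν ^ (-(1 : ℝ) / 3)) * ENNReal.ofReal (W * (q + a)) ^ ((1 : ℝ) / 2) *
        ENNReal.ofReal (W * (ν * g)) ^ ((1 : ℝ) / 4) *
        ENNReal.ofReal (W * (lamf ν k * q)) ^ ((1 : ℝ) / 4) := by
  have hκ : 0 < |k| := hν.trans_le hk
  have hlam : lamf ν k = ν ^ ((1 : ℝ) / 3) * |k| ^ ((2 : ℝ) / 3) := if_pos hk
  have hl := lamf_nonneg hν.le k
  have hg' : 0 ≤ g := (mul_nonneg (sq_nonneg k) hq).trans hg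
  have hreal : W * (|k| ^ ((2 : ℝ) / 3) * q) ≤
      ν ^ (-(1 : ℝ) / 3) * (W * (q + a)) ^ ((1 : ℝ) / 2) * (W * (ν * g)) ^ ((1 : ℝ) / 4) *
        (W * (lamf ν k * q)) ^ ((1 : ℝ) / 4) := by
    calc W * (|k| ^ ((2 : ℝ) / 3) * q) = |k| ^ ((2 : ℝ) / 3) * (W * q) := by ring
      _ = ν ^ (-(1 : ℝ) / 3) * (W * q) ^ ((1 : ℝ) / 2) *
            (ν * |k| ^ 2 * (W * q)) ^ ((1 : ℝ) / 4) *
            (ν ^ ((1 : ℝ) / 3) * |k| ^ ((2 : ℝ) / 3) * (W * q)) ^ ((1 : ℝ) / 4) :=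
        rpow_two_thirds_mul_eq hν hκ (by positivity)
      _ ≤ _ := by
        have hE : W * q ≤ W * (q + a) := by linear_combination W * ha
        have hD₁ : ν * |k| ^ 2 * (W * q) ≤ W * (ν * g) := by
          rw [sq_abs]; linear_combination (W * ν) * hg
        have hD₃ : ν ^ ((1 : ℝ) / 3) * |k| ^ ((2 : ℝ) / 3) * (W * q) = W * (lamf ν k * q) := by
          rw [hlam]; ring
        rw [hD₃]
        gcongr
  calc _ ≤ ENNReal.ofReal (ν ^ (-(1 : ℝ) / 3) * (W * (q + a)) ^ ((1 : ℝ) / 2) *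
        (W * (ν * g)) ^ ((1 : ℝ) / 4) * (W * (lamf ν k * q)) ^ ((1 : ℝ) / 4)) :=
        ENNReal.ofReal_le_ofReal hreal
    _ = _ := by
      rw [ENNReal.ofReal_mul (by positivity), ENNReal.ofReal_mul (by positivity),
        ENNReal.ofReal_mul (by positivity), ENNReal.ofReal_rpow_of_nonneg (by positivity)
        (by norm_num), ENNReal.ofReal_rpow_of_nonneg (by positivity) (by norm_num),
        ENNReal.ofReal_rpow_of_nonneg (by positivity) (by norm_num)]

theorem lemma32_second_general (m ε : ℝ) :
    ∃ C : ℝ, 0 < C ∧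
      ∀ (ν c t : ℝ), ν ∈ Set.Ioo (0 : ℝ) 1 → 0 < c → 0 ≤ t →
      ∀ (ω dω d2ω φ dφ d2φ : ℝ → ℝ → ℂ),
      Measurable (Function.uncurry ω) → Measurable (Function.uncurry dω) →
      Measurable (Function.uncurry d2ω) → Measurable (Function.uncurry φ) →
      Measurable (Function.uncurry dφ) → Measurable (Function.uncurry d2φ) →
      (∀ k : ℝ, ω k (-1) = 0 ∧ ω k 1 = 0) →
      (∀ k : ℝ, ∀ y ∈ Set.Icc (-1 : ℝ) 1,
        ω k y = ω k (-1) + ∫ s in (-1 : ℝ)..y, dω k s) →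
      (∀ k : ℝ, ∀ y ∈ Set.Icc (-1 : ℝ) 1,
        dω k y = dω k (-1) + ∫ s in (-1 : ℝ)..y, d2ω k s) →
      (∀ k : ℝ, MemLp (d2ω k) 2 (volume.restrict (Set.Icc (-1 : ℝ) 1))) →
      (∀ k : ℝ, k ≠ 0 → φ k (-1) = 0 ∧ φ k 1 = 0) →
      (∀ k : ℝ, k ≠ 0 → ∀ y ∈ Set.Icc (-1 : ℝ) 1,
        φ k y = φ k (-1) + ∫ s in (-1 : ℝ)..y, dφ k s) →
      (∀ k : ℝ, k ≠ 0 → ∀ y ∈ Set.Icc (-1 : ℝ) 1,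
        dφ k y = dφ k (-1) + ∫ s in (-1 : ℝ)..y, d2φ k s) →
      (∀ k : ℝ, k ≠ 0 → ∀ y ∈ Set.Icc (-1 : ℝ) 1,
        d2φ k y - (k : ℂ) ^ 2 * φ k y = ω k y) →
      EEn ν m ε c t ω dω ≠ ⊤ → D1n ν m ε c t ω dω ≠ ⊤ → D2n ν m ε c t dω d2ω ≠ ⊤ →
      D3n ν m ε c t ω ≠ ⊤ → D4n ν m ε c t φ dφ ≠ ⊤ → D5n ν m ε c t dφ d2φ ≠ ⊤ →
      ∫⁻ k in {k : ℝ | ν ≤ |k|},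
          ENNReal.ofReal (Wf ν m ε c t k * (|k| ^ ((2 : ℝ) / 3) * (L2y (ω k)) ^ 2)) ≤
        ENNReal.ofReal (C * ν ^ (-(1 : ℝ) / 3)) * (EEn ν m ε c t ω dω) ^ ((1 : ℝ) / 2) *
          (D1n ν m ε c t ω dω) ^ ((1 : ℝ) / 4) * (D3n ν m ε c t ω) ^ ((1 : ℝ) / 4) := by
  refine ⟨1, one_pos, ?_⟩
  rintro ν c t ⟨hν, -⟩ - - ω dω - - - - hω hdω - - - - - - - - - - - - - - - - - -
  have hL := measurable_L2y_comp hω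
  have hLd := measurable_L2y_comp hdω
  rw [one_mul]
  refine setLIntegral_le_const_mul_lintegral_pow (measurableSet_le measurable_const measurable_abs)
    ?_ ?_ ?_ (by norm_num) (by norm_num) (by norm_num) (by norm_num) fun k hk =>
      ofReal_mul_rpow_two_thirds_le hν hk (Wf_nonneg ν m ε c t k) (sq_nonneg _)
        (mul_nonneg (alphf_nonneg hν.le k) (sq_nonneg _)) (le_add_of_nonneg_right (sq_nonneg _))
  · fun_prop
  · unfold gradSq; fun_prop
  · fun_prop

theorem lemma32_second (m ε : ℝ) (hm : 1 < m) (hε : ε ∈ Set.Ioo (0 : ℝ) (1 / 12)) :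
    ∃ C : ℝ, 0 < C ∧
      ∀ (ν c t : ℝ), ν ∈ Set.Ioo (0 : ℝ) 1 → 0 < c → 0 ≤ t →
      ∀ (ω dω d2ω φ dφ d2φ : ℝ → ℝ → ℂ),
      Measurable (Function.uncurry ω) → Measurable (Function.uncurry dω) →
      Measurable (Function.uncurry d2ω) → Measurable (Function.uncurry φ) →
      Measurable (Function.uncurry dφ) → Measurable (Function.uncurry d2φ) →
      (∀ k : ℝ, ω k (-1) = 0 ∧ ω k 1 = 0) →
      (∀ k : ℝ, ∀ y ∈ Set.Icc (-1 : ℝ) 1,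
        ω k y = ω k (-1) + ∫ s in (-1 : ℝ)..y, dω k s) →
      (∀ k : ℝ, ∀ y ∈ Set.Icc (-1 : ℝ) 1,
        dω k y = dω k (-1) + ∫ s in (-1 : ℝ)..y, d2ω k s) →
      (∀ k : ℝ, MemLp (d2ω k) 2 (volume.restrict (Set.Icc (-1 : ℝ) 1))) →
      (∀ k : ℝ, k ≠ 0 → φ k (-1) = 0 ∧ φ k 1 = 0) →
      (∀ k : ℝ, k ≠ 0 → ∀ y ∈ Set.Icc (-1 : ℝ) 1,
        φ k y = φ k (-1) + ∫ s in (-1 : ℝ)..y, dφ k s) →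
      (∀ k : ℝ, k ≠ 0 → ∀ y ∈ Set.Icc (-1 : ℝ) 1,
        dφ k y = dφ k (-1) + ∫ s in (-1 : ℝ)..y, d2φ k s) →
      (∀ k : ℝ, k ≠ 0 → ∀ y ∈ Set.Icc (-1 : ℝ) 1,
        d2φ k y - (k : ℂ) ^ 2 * φ k y = ω k y) →
      EEn ν m ε c t ω dω ≠ ⊤ → D1n ν m ε c t ω dω ≠ ⊤ → D2n ν m ε c t dω d2ω ≠ ⊤ →
      D3n ν m ε c t ω ≠ ⊤ → D4n ν m ε c t φ dφ ≠ ⊤ → D5n ν m ε c t dφ d2φ ≠ ⊤ →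
      ∫⁻ k in {k : ℝ | ν ≤ |k|},
          ENNReal.ofReal (Wf ν m ε c t k * (|k| ^ ((2 : ℝ) / 3) * (L2y (ω k)) ^ 2)) ≤
        ENNReal.ofReal (C * ν ^ (-(1 : ℝ) / 3)) * (EEn ν m ε c t ω dω) ^ ((1 : ℝ) / 2) *
          (D1n ν m ε c t ω dω) ^ ((1 : ℝ) / 4) * (D3n ν m ε c t ω) ^ ((1 : ℝ) / 4) :=
  lemma32_second_general m ε

end
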